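/- Let ν be a locally finite (Radon) measure on ℝ and define (w^{(ω)}ν)(x,y) := ∫_{(y,x]} w^{(ω)}(x,z) ν(dz). Then (w^{(ω)}ν)(x,y) = ∫_{(y,x]} w(x,z) ν(dz) + ∫_y^x w(x,z) ω(z) (w^{(ω)}ν)(z,y) dz for all x ≥ y. -/

import Mathlib

open MeasureTheory Set Real

/-! Substituting the resolvent equation for `wω x z` and integrating in `z` against `ν` over
`(y, x]` leaves a double integral of `w x u * ω u * wω u z` over the triangle `y < z ≤ u ≤ x`.
The integrand is bounded and measurable on a compact square, so Fubini exchanges the order,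
and the inner `ν`-integral `∫ z in (y, u], wω u z ∂ν` is `F u y`. -/

theorem IsCompact.integrableOn_of_norm_le {α E : Type*} [TopologicalSpace α] [MeasurableSpace α]
    [OpensMeasurableSpace α] [T2Space α] [NormedAddCommGroup E] {μ : Measure α}
    [IsLocallyFiniteMeasure μ] {s : Set α} (hs : IsCompact s) {f : α → E}
    (hf : AEStronglyMeasurable f μ) {C : ℝ} (hC : ∀ a ∈ s, ‖f a‖ ≤ C) : IntegrableOn f s μ :=
  Measure.integrableOn_of_bounded hs.measure_lt_top.ne hf
    (ae_restrict_of_forall_mem hs.measurableSet hC)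

theorem setIntegral_Ioc_integral_Ioc_swap {E : Type*} [NormedAddCommGroup E] [NormedSpace ℝ E]
    {μ ν : Measure ℝ} [SigmaFinite μ] [SigmaFinite ν] [NullSingletonClass μ] {g : ℝ → ℝ → E}
    {x y : ℝ} (hg : IntegrableOn (Function.uncurry g) (Icc y x ×ˢ Icc y x) (ν.prod μ)) :
    ∫ z in Ioc y x, ∫ u in Ioc z x, g z u ∂μ ∂ν =
      ∫ u in Ioc y x, ∫ z in Ioc y u, g z u ∂ν ∂μ := by
  set T : Set (ℝ × ℝ) := {p | y < p.1 ∧ p.1 ≤ p.2 ∧ p.2 ≤ x}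
  have hT : MeasurableSet T := by unfold T; measurability
  have hG : Integrable (fun p => T.indicator (Function.uncurry g) p) (ν.prod μ) :=
    (integrable_indicator_iff hT).2 <| hg.mono_set fun p hp =>
      ⟨⟨hp.1.le, hp.2.1.trans hp.2.2⟩, ⟨hp.1.le.trans hp.2.1, hp.2.2⟩⟩
  have hrow : ∀ z, ∫ u, T.indicator (Function.uncurry g) (z, u) ∂μ =
      (Ioc y x).indicator (fun z => ∫ u in Icc z x, g z u ∂μ) z := by
    intro z
    by_cases hz : z ∈ Ioc y x
    · rw [indicator_of_mem hz, ← integral_indicator measurableSet_Icc]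
      congr 1 with u
      simp [T, indicator_apply, hz.1]
    · rw [indicator_of_notMem hz]
      exact integral_eq_zero_of_ae <| .of_forall fun u =>
        indicator_of_notMem (fun hp => hz ⟨hp.1, hp.2.1.trans hp.2.2⟩) _
  have hcol : ∀ u, ∫ z, T.indicator (Function.uncurry g) (z, u) ∂ν =
      (Ioc y x).indicator (fun u => ∫ z in Ioc y u, g z u ∂ν) u := by
    intro u
    by_cases hu : u ∈ Ioc y x
    · rw [indicator_of_mem hu, ← integral_indicator measurableSet_Ioc]
      congr 1 with z
      simp [T, indicator_apply, hu.2]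
    · rw [indicator_of_notMem hu]
      exact integral_eq_zero_of_ae <| .of_forall fun z =>
        indicator_of_notMem (fun hp => hu ⟨hp.1.trans_le hp.2.1, hp.2.2⟩) _
  calc ∫ z in Ioc y x, ∫ u in Ioc z x, g z u ∂μ ∂ν
      = ∫ z in Ioc y x, ∫ u in Icc z x, g z u ∂μ ∂ν := by
        -- the diagonal `u = z` is `μ`-null, which is what makes the two triangles match
        simp_rw [integral_Icc_eq_integral_Ioc]
    _ = ∫ z, ∫ u, T.indicator (Function.uncurry g) (z, u) ∂μ ∂ν := by
        simp_rw [hrow, integral_indicator measurableSet_Ioc]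
    _ = ∫ u, ∫ z, T.indicator (Function.uncurry g) (z, u) ∂ν ∂μ :=
        integral_integral_swap hG
    _ = ∫ u in Ioc y x, ∫ z in Ioc y u, g z u ∂ν ∂μ := by
        simp_rw [hcol, integral_indicator measurableSet_Ioc]

theorem integrableOn_Icc_prod_Icc_mul_mul {μ ν : Measure ℝ} [IsLocallyFiniteMeasure μ]
    [IsLocallyFiniteMeasure ν] {f g : ℝ → ℝ} {k : ℝ → ℝ → ℝ} (hf : Measurable f)
    (hg : Measurable g) (hk : Measurable (Function.uncurry k)) {a b Cf Cg Ck : ℝ}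
    (hCf : ∀ u ∈ Icc a b, |f u| ≤ Cf) (hCg : ∀ u ∈ Icc a b, |g u| ≤ Cg)
    (hCk : ∀ u ∈ Icc a b, ∀ z ∈ Icc a b, |k u z| ≤ Ck) :
    IntegrableOn (Function.uncurry fun z u => f u * g u * k u z) (Icc a b ×ˢ Icc a b)
      (ν.prod μ) := by
  refine (isCompact_Icc.prod isCompact_Icc).integrableOn_of_norm_le (C := Cf * Cg * Ck) ?_
    fun p hp => ?_
  · exact (((hf.comp measurable_snd).mul (hg.comp measurable_snd)).mul
      (hk.comp (measurable_snd.prodMk measurable_fst))).aestronglyMeasurable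
  · have hf := hCf p.2 hp.2
    have hg := hCg p.2 hp.2
    have hCf0 : 0 ≤ Cf := (abs_nonneg _).trans hf
    have hCg0 : 0 ≤ Cg := (abs_nonneg _).trans hg
    simp only [Function.uncurry, norm_mul, Real.norm_eq_abs]
    gcongr
    exact hCk p.2 hp.2 p.1 hp.1

theorem stmt_7_general (w : ℝ → ℝ → ℝ) (hwm : Measurable (Function.uncurry w))
    (hwloc : ∀ r : ℝ, ∃ C : ℝ, ∀ x y : ℝ, |x| ≤ r → |y| ≤ r → |w x y| ≤ C)
    (ω : ℝ → ℝ) (hωm : Measurable ω) (hωpos : ∀ z, 0 ≤ ω z)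
    (hωloc : ∀ r : ℝ, ∃ C : ℝ, ∀ z : ℝ, |z| ≤ r → ω z ≤ C)
    (wω : ℝ → ℝ → ℝ) (hwωm : Measurable (Function.uncurry wω))
    (hwωloc : ∀ r : ℝ, ∃ C : ℝ, ∀ x y : ℝ, |x| ≤ r → |y| ≤ r → |wω x y| ≤ C)
    (hwωeq : ∀ x y : ℝ,
      wω x y = w x y + ∫ z in Set.Ioc y x, w x z * ω z * wω z y)
    (ν : Measure ℝ) [IsLocallyFiniteMeasure ν]
    (F : ℝ → ℝ → ℝ)
    (hF : ∀ x y : ℝ, F x y = ∫ z in Set.Ioc y x, wω x z ∂ν) :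
    ∀ x y : ℝ, y ≤ x →
      F x y = (∫ z in Set.Ioc y x, w x z ∂ν)
        + ∫ z in Set.Ioc y x, w x z * ω z * F z y := by
  intro x y hyx
  obtain ⟨r, hr⟩ : ∃ r, ∀ z ∈ Icc y x, |z| ≤ r :=
    ⟨max |y| |x|, fun z hz => abs_le_max_abs_abs hz.1 hz.2⟩
  have hxr : |x| ≤ r := hr x (right_mem_Icc.2 hyx)
  obtain ⟨Cw, hCw⟩ := hwloc r
  obtain ⟨Cω, hCω⟩ := hωloc r
  obtain ⟨Cwω, hCwω⟩ := hwωloc r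
  have hw : IntegrableOn (w x) (Icc y x) ν := isCompact_Icc.integrableOn_of_norm_le
    hwm.of_uncurry_left.aestronglyMeasurable fun z hz => hCw x z hxr (hr z hz)
  have hwω : IntegrableOn (wω x) (Icc y x) ν := isCompact_Icc.integrableOn_of_norm_le
    hwωm.of_uncurry_left.aestronglyMeasurable fun z hz => hCwω x z hxr (hr z hz)
  have hkernel : IntegrableOn (Function.uncurry fun z u => w x u * ω u * wω u z)
      (Icc y x ×ˢ Icc y x) (ν.prod volume) :=
    integrableOn_Icc_prod_Icc_mul_mul hwm.of_uncurry_left hωm hwωm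
      (fun u hu => hCw x u hxr (hr u hu))
      (fun u hu => (abs_of_nonneg (hωpos u)).trans_le (hCω u (hr u hu)))
      fun u hu z hz => hCwω u z (hr u hu) (hr z hz)
  have hinner : ∫ z in Ioc y x, (∫ u in Ioc z x, w x u * ω u * wω u z) ∂ν =
      F x y - ∫ z in Ioc y x, w x z ∂ν := by
    rw [hF, ← integral_sub (hwω.mono_set Ioc_subset_Icc_self)
      (hw.mono_set Ioc_subset_Icc_self)]
    congr 1 with z
    rw [hwωeq x z, add_sub_cancel_left]
  have hswap := setIntegral_Ioc_integral_Ioc_swap hkernel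
  simp_rw [integral_const_mul, ← hF] at hswap
  rw [← hswap, hinner, add_sub_cancel]

/-- Remark 3.1: for a Radon measure `ν`, the function
`(w^{(ω)}ν)(x,y) := ∫_{(y,x]} w^{(ω)}(x,z) ν(dz)` solves
`(w^{(ω)}ν)(x,y) = ∫_{(y,x]} w(x,z) ν(dz) + ∫_y^x w(x,z) ω(z) (w^{(ω)}ν)(z,y) dz`. -/
theorem stmt_7 (w : ℝ → ℝ → ℝ) (hwm : Measurable (Function.uncurry w))
    (hwloc : ∀ r : ℝ, ∃ C : ℝ, ∀ x y : ℝ, |x| ≤ r → |y| ≤ r → |w x y| ≤ C)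
    (hw0 : ∀ x y : ℝ, x < y → w x y = 0)
    (ω : ℝ → ℝ) (hωm : Measurable ω) (hωpos : ∀ z, 0 ≤ ω z)
    (hωloc : ∀ r : ℝ, ∃ C : ℝ, ∀ z : ℝ, |z| ≤ r → ω z ≤ C)
    (wω : ℝ → ℝ → ℝ) (hwωm : Measurable (Function.uncurry wω))
    (hwωloc : ∀ r : ℝ, ∃ C : ℝ, ∀ x y : ℝ, |x| ≤ r → |y| ≤ r → |wω x y| ≤ C)
    (hwω0 : ∀ x y : ℝ, x < y → wω x y = 0)
    (hwωeq : ∀ x y : ℝ,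
      wω x y = w x y + ∫ z in Set.Ioc y x, w x z * ω z * wω z y)
    (ν : Measure ℝ) [IsLocallyFiniteMeasure ν]
    (F : ℝ → ℝ → ℝ)
    (hF : ∀ x y : ℝ, F x y = ∫ z in Set.Ioc y x, wω x z ∂ν) :
    ∀ x y : ℝ, y ≤ x →
      F x y = (∫ z in Set.Ioc y x, w x z ∂ν)
        + ∫ z in Set.Ioc y x, w x z * ω z * F z y :=
  stmt_7_general w hwm hwloc ω hωm hωpos hωloc wω hwωm hwωloc hwωeq ν F hF
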